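/- Let a_1,...,a_ℓ be nonzero complex numbers such that both (a_1,...,a_ℓ) and (a_1^m,...,a_ℓ^m) have pairwise distinct coordinates. Then the composite map L^σ(𝔤) → L(𝔤) → L(𝔤)/(𝔤 ⊗ ∏_{k=1}^ℓ (t-a_k)^N C[t,t^{-1}]) is surjective for every positive integer N. -/

import Mathlib

/-!
Decompose `x ∈ g` into eigenvectors `x_ε ∈ g_ε` of `σ` (averaging over the cyclic group
generated by `σ`). Then `p ⊗ x_ε` lies in `L^σ(g)` modulo `g ⊗ f ℂ[t,t⁻¹]`, `f = ∏ (t - a_r)^N`,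
as soon as every Laurent polynomial is congruent modulo `f` to an element of `ℂ[tᵐ,t⁻ᵐ]` (up to
the shift `t^{-ε}`), i.e. as soon as `ℂ[tᵐ] → ℂ[t]/(f)` is onto. The substitution `s ↦ tᵐ` induces
`ℂ[s]/(∏ (s - a_rᵐ)^N) → ℂ[t]/(f)`; it is injective because `tᵐ - a_rᵐ` has a simple zero at
`a_r ≠ 0` and the `a_rᵐ` are distinct, and both sides have dimension `N ℓ`, so it is onto.
-/

open scoped TensorProduct
open LaurentPolynomial

noncomputable section

/-- The loop algebra `L(g) = g ⊗ ℂ[t,t⁻¹]` (realized as `ℂ[t,t⁻¹] ⊗[ℂ] g`), with bracket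
`⁅x ⊗ tʳ, y ⊗ tˢ⁆ = ⁅x,y⁆ ⊗ t^{r+s}`. -/
abbrev Loop (g : Type*) [LieRing g] [LieAlgebra ℂ g] : Type _ := LaurentPolynomial ℂ ⊗[ℂ] g

instance (g : Type*) [LieRing g] [LieAlgebra ℂ g] : LieAlgebra ℂ (Loop g) :=
  { (inferInstance : Module ℂ (Loop g)) with
    lie_smul := fun t x y => by
      rw [← algebraMap_smul (LaurentPolynomial ℂ) t y,
        ← algebraMap_smul (LaurentPolynomial ℂ) t ⁅x, y⁆]
      exact LieAlgebra.lie_smul _ x y }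

variable {g : Type*} [LieRing g] [LieAlgebra ℂ g]

/-- The `μ`-eigenspace of an automorphism `σ` of `g`; for `μ = ζ^ε` this is the piece
`g_ε` of the eigenspace decomposition. -/
def eig (σ : g ≃ₗ⁅ℂ⁆ g) (μ : ℂ) : Submodule ℂ g :=
  Module.End.eigenspace (σ.toLinearEquiv : g →ₗ[ℂ] g) μ

/-- The subset `⋃_ε { g_ε ⊗ t^{mk-ε} : k ∈ ℤ }` of `L(g)`, whose span is the twisted loop
algebra `L^σ(g) = ⊕_{ε=0}^{m-1} g_ε ⊗ t^{m-ε} ℂ[tᵐ,t⁻ᵐ]`. -/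
def twistedSet (m : ℕ) (σ : g ≃ₗ⁅ℂ⁆ g) (ζ : ℂ) : Set (Loop g) :=
  {z | ∃ (ε : Fin m) (k : ℤ) (x : g), x ∈ eig σ (ζ ^ (ε : ℕ)) ∧
    z = (T ((m : ℤ) * k - ((ε : ℕ) : ℤ)) : LaurentPolynomial ℂ) ⊗ₜ[ℂ] x}

/-- The twisted loop algebra `L^σ(g) = ⊕_{ε=0}^{m-1} g_ε ⊗ t^{m-ε} ℂ[tᵐ,t⁻ᵐ]`, the
fixed-point subalgebra of `σ̃(x ⊗ tᵏ) = ζᵏ σ(x) ⊗ tᵏ`. -/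
def twistedLoop (m : ℕ) (σ : g ≃ₗ⁅ℂ⁆ g) (ζ : ℂ) : LieSubalgebra ℂ (Loop g) :=
  LieSubalgebra.lieSpan ℂ (Loop g) (twistedSet m σ ζ)

/-- The subset `⋃_ε { g_ε ⊗ t^{mk-ε}·q : k ∈ ℤ }` of `L(g)`; for
`q = ∏ (tᵐ - aᵣᵐ)^N` its span is the ideal `⊕_ε g_ε ⊗ t^{m-ε} ∏ (tᵐ-aᵣᵐ)^N ℂ[tᵐ,t⁻ᵐ]`
of `L^σ(g)`. -/
def twistedIdealSet (m : ℕ) (σ : g ≃ₗ⁅ℂ⁆ g) (ζ : ℂ) (q : LaurentPolynomial ℂ) :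
    Set (Loop g) :=
  {z | ∃ (ε : Fin m) (k : ℤ) (x : g), x ∈ eig σ (ζ ^ (ε : ℕ)) ∧
    z = ((T ((m : ℤ) * k - ((ε : ℕ) : ℤ)) : LaurentPolynomial ℂ) * q) ⊗ₜ[ℂ] x}

/-- The ideal `⊕_ε g_ε ⊗ t^{m-ε}·q·ℂ[tᵐ,t⁻ᵐ]` of the twisted loop algebra `L^σ(g)`. -/
def twistedIdeal (m : ℕ) (σ : g ≃ₗ⁅ℂ⁆ g) (ζ : ℂ) (q : LaurentPolynomial ℂ) :
    LieIdeal ℂ ↥(twistedLoop m σ ζ) :=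
  LieSubmodule.lieSpan ℂ ↥(twistedLoop m σ ζ)
    {z : ↥(twistedLoop m σ ζ) |
      (z : Loop g) ∈ Submodule.span ℂ (twistedIdealSet m σ ζ q)}

/-- The Lie ideal `g ⊗ f·ℂ[t,t⁻¹]` of the loop algebra, for `f ∈ ℂ[t,t⁻¹]`. -/
def loopIdeal (f : LaurentPolynomial ℂ) : LieIdeal ℂ (Loop g) :=
  LieSubmodule.lieSpan ℂ (Loop g)
    {z | ∃ (p : LaurentPolynomial ℂ) (x : g), p ∈ Ideal.span {f} ∧ z = p ⊗ₜ[ℂ] x}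


namespace Polynomial

variable {K : Type*} [Field K] {m : ℕ}

theorem exists_X_pow_sub_C_pow_eq_X_sub_C_mul_not_dvd (hm : (m : K) ≠ 0) {a : K} (ha : a ≠ 0) :
    ∃ w : K[X], X ^ m - C (a ^ m) = (X - C a) * w ∧ ¬X - C a ∣ w := by
  obtain ⟨w, hw⟩ : X - C a ∣ X ^ m - C (a ^ m) := by simp [dvd_iff_isRoot]
  refine ⟨w, hw, fun hdvd => ?_⟩
  -- differentiating at `a`: `m aᵐ⁻¹ = w(a) = 0`
  have h := congrArg (fun p => (derivative p).eval a) hw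
  simp only [derivative_sub, derivative_X_pow, derivative_C, derivative_mul, derivative_X] at h
  simp [(dvd_iff_isRoot.1 hdvd).eq_zero, ha, hm] at h

theorem X_sub_C_pow_dvd_of_dvd_expand (hm : (m : K) ≠ 0) {a : K} (ha : a ≠ 0) (n : ℕ) :
    ∀ {u : K[X]}, (X - C a) ^ n ∣ expand K m u → (X - C (a ^ m)) ^ n ∣ u := by
  induction n with
  | zero => simp
  | succ n ih =>
    intro u h
    obtain ⟨v, rfl⟩ : X - C (a ^ m) ∣ u := by
      rw [dvd_iff_isRoot, IsRoot, ← expand_eval, ← IsRoot, ← dvd_iff_isRoot]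
      exact (dvd_pow_self _ n.succ_ne_zero).trans h
    obtain ⟨w, hw, hwa⟩ := exists_X_pow_sub_C_pow_eq_X_sub_C_mul_not_dvd hm ha
    rw [map_mul, map_sub, expand_X, expand_C, hw, mul_assoc, pow_succ'] at h
    have hv : (X - C a) ^ n ∣ expand K m v :=
      (prime_X_sub_C a).pow_dvd_of_dvd_mul_left n hwa
        ((mul_dvd_mul_iff_left (X_sub_C_ne_zero a)).1 h)
    rw [pow_succ']
    exact mul_dvd_mul_left _ (ih hv)

variable {ι : Type*} [Fintype ι]

theorem prod_X_sub_C_pow_dvd_expand (a : ι → K) (N : ℕ) :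
    ∏ r, (X - C (a r)) ^ N ∣ expand K m (∏ r, (X - C (a r ^ m)) ^ N) := by
  rw [map_prod]
  refine Finset.prod_dvd_prod_of_dvd _ _ fun r _ => ?_
  rw [map_pow]
  exact pow_dvd_pow_of_dvd (by simp [dvd_iff_isRoot]) N

theorem prod_X_sub_C_pow_dvd_of_dvd_expand (hm : (m : K) ≠ 0) {a : ι → K} (ha : ∀ r, a r ≠ 0)
    (hinj : Function.Injective fun r => a r ^ m) {N : ℕ} {u : K[X]}
    (h : ∏ r, (X - C (a r)) ^ N ∣ expand K m u) : ∏ r, (X - C (a r ^ m)) ^ N ∣ u :=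
  Fintype.prod_dvd_of_coprime (fun _ _ hrs => (pairwise_coprime_X_sub_C hinj hrs).pow) fun r =>
    X_sub_C_pow_dvd_of_dvd_expand hm (ha r) N
      ((Finset.dvd_prod_of_mem (fun s => (X - C (a s)) ^ N) (Finset.mem_univ r)).trans h)

theorem exists_prod_X_sub_C_pow_dvd_sub_expand (hm : (m : K) ≠ 0) {a : ι → K}
    (ha : ∀ r, a r ≠ 0) (hinj : Function.Injective fun r => a r ^ m) (N : ℕ) (P : K[X]) :
    ∃ u : K[X], ∏ r, (X - C (a r)) ^ N ∣ P - expand K m u := by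
  set F := ∏ r, (X - C (a r)) ^ N
  set G := ∏ r, (X - C (a r ^ m)) ^ N
  have hF : F.Monic := monic_prod_of_monic _ _ fun r _ => (monic_X_sub_C _).pow N
  have hG : G.Monic := monic_prod_of_monic _ _ fun r _ => (monic_X_sub_C _).pow N
  -- `u ↦ u(Xᵐ)` descends to an injective map `K[X]/(G) → K[X]/(F)`, and both sides have
  -- dimension `N · card ι`
  let φ : AdjoinRoot G →ₐ[K] AdjoinRoot F :=
    AdjoinRoot.liftAlgHom G (Algebra.ofId K _) (AdjoinRoot.root F ^ m) <| by
      change aeval _ G = 0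
      rw [← expand_aeval, AdjoinRoot.aeval_eq, AdjoinRoot.mk_eq_zero]
      exact prod_X_sub_C_pow_dvd_expand a N
  have hφ (u : K[X]) : φ (AdjoinRoot.mk G u) = AdjoinRoot.mk F (expand K m u) := by
    change aeval _ u = _
    rw [← expand_aeval, AdjoinRoot.aeval_eq]
  have hφinj : Function.Injective φ := by
    rw [injective_iff_map_eq_zero]
    intro z hz
    obtain ⟨u, rfl⟩ := AdjoinRoot.mk_surjective z
    rw [hφ, AdjoinRoot.mk_eq_zero] at hz
    exact AdjoinRoot.mk_eq_zero.2 (prod_X_sub_C_pow_dvd_of_dvd_expand hm ha hinj hz)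
  have := hF.finite_adjoinRoot
  have := hG.finite_adjoinRoot
  have hrank : Module.finrank K (AdjoinRoot G) = Module.finrank K (AdjoinRoot F) := by
    rw [(AdjoinRoot.powerBasis hG.ne_zero).finrank, (AdjoinRoot.powerBasis hF.ne_zero).finrank]
    simp only [AdjoinRoot.powerBasis_dim, F, G,
      natDegree_prod_of_monic _ _ fun r _ => (monic_X_sub_C (a r)).pow N,
      natDegree_prod_of_monic _ _ fun r _ => (monic_X_sub_C (a r ^ m)).pow N,
      natDegree_pow, natDegree_X_sub_C]
  obtain ⟨z, hz⟩ := (LinearMap.injective_iff_surjective_of_finrank_eq_finrank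
    (f := φ.toLinearMap) hrank).1 hφinj (AdjoinRoot.mk F P)
  obtain ⟨u, rfl⟩ := AdjoinRoot.mk_surjective z
  refine ⟨u, ?_⟩
  rw [← AdjoinRoot.mk_eq_zero, map_sub, ← hφ]
  exact sub_eq_zero.2 hz.symm

end Polynomial

namespace LaurentPolynomial

open Polynomial (X expand toLaurent)
open scoped Polynomial

variable {R : Type*} [CommRing R]

def twistedMonomials (m : ℕ) (ε : ℤ) : Submodule R R[T;T⁻¹] :=
  Submodule.span R {p | ∃ k : ℤ, p = T (m * k - ε)}

theorem toLaurent_expand_mul_T_mem_twistedMonomials (m : ℕ) (ε c : ℤ) (u : R[X]) :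
    toLaurent (expand R m u) * T (m * c - ε) ∈ twistedMonomials (R := R) m ε := by
  induction u using Polynomial.induction_on' with
  | add p q hp hq =>
    rw [map_add, map_add, add_mul]
    exact add_mem hp hq
  | monomial n r =>
    have hT : T (n * m : ℕ) * T (m * c - ε) = (T (m * (n + c) - ε) : R[T;T⁻¹]) := by
      rw [← T_add]
      congr 1
      push_cast
      ring
    rw [Polynomial.expand_monomial, ← Polynomial.C_mul_X_pow_eq_monomial,
      Polynomial.toLaurent_C_mul_X_pow, mul_assoc, hT, ← smul_eq_C_mul]
    exact Submodule.smul_mem _ _ (Submodule.subset_span ⟨n + c, rfl⟩)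

theorem mem_twistedMonomials_sup_span {m : ℕ} (hm : 0 < m) {F : R[X]}
    (hF : ∀ P : R[X], ∃ u : R[X], F ∣ P - expand R m u) (ε : ℤ) (p : R[T;T⁻¹]) :
    p ∈ twistedMonomials m ε ⊔ (Ideal.span {toLaurent F}).restrictScalars R := by
  obtain ⟨n, P, hP⟩ := exists_T_pow (p * T ε)
  -- pad the shift `n` up to the multiple `m * n`
  have hPm : toLaurent (P * X ^ (m * n - n)) * T (m * -(n : ℤ) - ε) = p := by
    rw [map_mul, hP, Polynomial.toLaurent_X_pow, mul_assoc, mul_assoc, mul_assoc, ← T_add,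
      ← T_add, ← T_add]
    refine (congrArg (p * T ·) ?_).trans (by rw [T_zero, mul_one])
    push_cast [Nat.cast_sub (Nat.le_mul_of_pos_left n hm)]
    ring
  obtain ⟨u, v, huv⟩ := hF (P * X ^ (m * n - n))
  rw [← hPm, sub_eq_iff_eq_add'.1 huv, map_add, add_mul, map_mul, mul_assoc]
  exact Submodule.add_mem_sup (toLaurent_expand_mul_T_mem_twistedMonomials m ε _ u)
    (Ideal.mul_mem_right _ _ (Ideal.mem_span_singleton_self _))

end LaurentPolynomial

namespace Module.End

variable {K V : Type*} [Field K] [AddCommGroup V] [Module K V] {m : ℕ} {s : Module.End K V}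

theorem mul_sum_inv_pow_smul_pow (hs : s ^ m = 1) {μ : K} (hμ : μ ^ m = 1) (hμ0 : μ ≠ 0) :
    s * ∑ k ∈ Finset.range m, μ⁻¹ ^ k • s ^ k = μ • ∑ k ∈ Finset.range m, μ⁻¹ ^ k • s ^ k := by
  -- a geometric sum in `t = μ⁻¹ s`, which satisfies `tᵐ = 1`
  set t := μ⁻¹ • s
  have hsum : ∑ k ∈ Finset.range m, μ⁻¹ ^ k • s ^ k = ∑ k ∈ Finset.range m, t ^ k := by
    simp only [t, smul_pow]
  have ht : (t - 1) * ∑ k ∈ Finset.range m, t ^ k = 0 := by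
    rw [mul_geom_sum, smul_pow, hs, inv_pow, hμ, inv_one, one_smul, sub_self]
  have hst : s = μ • t := by simp only [t, smul_smul, mul_inv_cancel₀ hμ0, one_smul]
  rw [hsum]
  nth_rw 1 [hst]
  rw [smul_mul_assoc, ← sub_eq_zero, ← smul_sub, ← sub_one_mul, ht, smul_zero]

theorem sum_sum_inv_pow_smul_pow (hm : 0 < m) {ζ : K} (hζ : IsPrimitiveRoot ζ m) :
    ∑ ε ∈ Finset.range m, ∑ k ∈ Finset.range m, (ζ ^ ε)⁻¹ ^ k • s ^ k = (m : K) • 1 := by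
  rw [Finset.sum_comm]
  simp_rw [← Finset.sum_smul]
  rw [Finset.sum_eq_single_of_mem 0 (Finset.mem_range.2 hm)]
  · simp
  intro k hk hk0
  -- the characters `ε ↦ ζ^{-εk}`, `0 < k < m`, of `ℤ/m` are nontrivial
  have hξ : (ζ ^ k)⁻¹ ≠ 1 :=
    inv_ne_one.2 (hζ.pow_ne_one_of_pos_of_lt hk0 (Finset.mem_range.1 hk))
  have hξm : (ζ ^ k)⁻¹ ^ m = 1 := by
    rw [inv_pow, ← pow_mul, mul_comm, pow_mul, hζ.pow_eq_one, one_pow, inv_one]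
  have hcomm (ε : ℕ) : (ζ ^ ε)⁻¹ ^ k = (ζ ^ k)⁻¹ ^ ε := by
    rw [inv_pow, inv_pow, ← pow_mul, ← pow_mul, mul_comm]
  simp_rw [hcomm, geom_sum_eq hξ, hξm, sub_self, zero_div, zero_smul]

theorem exists_sum_mem_eigenspace_pow (hm : 0 < m) {ζ : K} (hζ : IsPrimitiveRoot ζ m)
    (hs : s ^ m = 1) (x : V) :
    ∃ c : Fin m → V, (∀ ε : Fin m, c ε ∈ s.eigenspace (ζ ^ (ε : ℕ))) ∧ ∑ ε, c ε = x := by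
  have := NeZero.of_pos hm
  have := hζ.neZero'
  refine ⟨fun ε => (m : K)⁻¹ • (∑ k ∈ Finset.range m, (ζ ^ (ε : ℕ))⁻¹ ^ k • s ^ k) x,
    fun ε => ?_, ?_⟩
  · have hμ : (ζ ^ (ε : ℕ)) ^ m = 1 := by
      rw [← pow_mul, mul_comm, pow_mul, hζ.pow_eq_one, one_pow]
    rw [mem_eigenspace_iff, map_smul, ← mul_apply,
      mul_sum_inv_pow_smul_pow hs hμ (pow_ne_zero _ (hζ.ne_zero hm.ne')), LinearMap.smul_apply,
      smul_comm]
  · rw [← Finset.smul_sum, ← LinearMap.sum_apply,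
      Fin.sum_univ_eq_sum_range (fun ε => ∑ k ∈ Finset.range m, (ζ ^ ε)⁻¹ ^ k • s ^ k) m,
      sum_sum_inv_pow_smul_pow hm hζ, LinearMap.smul_apply, one_apply, smul_smul,
      inv_mul_cancel₀ (NeZero.ne _), one_smul]

end Module.End

theorem LieSubalgebra.surjective_quotient_mk'_of_sup_eq_top {R L : Type*} [CommRing R]
    [LieRing L] [LieAlgebra R L] {K : LieSubalgebra R L} {I : LieIdeal R L}
    (h : K.toSubmodule ⊔ I.toSubmodule = ⊤) :
    Function.Surjective fun z : K => LieSubmodule.Quotient.mk' I (z : L) := by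
  intro q
  obtain ⟨w, rfl⟩ := LieSubmodule.Quotient.surjective_mk' I q
  obtain ⟨y, hy, z, hz, rfl⟩ := Submodule.mem_sup.1 (h ▸ Submodule.mem_top : w ∈ _)
  refine ⟨⟨y, hy⟩, ?_⟩
  rw [map_add, (LieSubmodule.Quotient.mk_eq_zero I).2 hz, add_zero]

open Polynomial (X expand toLaurent)
open scoped Polynomial

section TwistedLoop

variable {m : ℕ} {σ : g ≃ₗ⁅ℂ⁆ g} {ζ : ℂ}

theorem tmul_mem_twistedLoop {ε : Fin m} {p : LaurentPolynomial ℂ}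
    (hp : p ∈ twistedMonomials m (ε : ℕ)) {x : g} (hx : x ∈ eig σ (ζ ^ (ε : ℕ))) :
    p ⊗ₜ[ℂ] x ∈ (twistedLoop m σ ζ).toSubmodule := by
  have hmap := Submodule.mem_map_of_mem (f := (TensorProduct.mk ℂ _ g).flip x) hp
  rw [twistedMonomials, Submodule.map_span] at hmap
  refine Submodule.span_le.2 ?_ hmap
  rintro _ ⟨_, ⟨k, rfl⟩, rfl⟩
  exact LieSubalgebra.subset_lieSpan ⟨ε, k, x, hx, rfl⟩

theorem tmul_mem_loopIdeal {f p : LaurentPolynomial ℂ} (hp : p ∈ Ideal.span {f}) (x : g) :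
    p ⊗ₜ[ℂ] x ∈ loopIdeal f :=
  LieSubmodule.subset_lieSpan ⟨p, x, hp, rfl⟩

theorem twistedLoop_sup_loopIdeal_eq_top (hm : 0 < m) (hσ : ∀ x, (⇑σ)^[m] x = x)
    (hζ : IsPrimitiveRoot ζ m) {F : ℂ[X]} (hF : ∀ P : ℂ[X], ∃ u : ℂ[X], F ∣ P - expand ℂ m u) :
    (twistedLoop m σ ζ).toSubmodule ⊔ (loopIdeal (g := g) (toLaurent F)).toSubmodule = ⊤ := by
  have hσm : (σ.toLinearEquiv : Module.End ℂ g) ^ m = 1 :=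
    LinearMap.ext fun x => (Module.End.pow_apply _ m x).trans (hσ x)
  rw [eq_top_iff, ← TensorProduct.span_tmul_eq_top, Submodule.span_le]
  rintro _ ⟨p, x, rfl⟩
  obtain ⟨c, hc, rfl⟩ := Module.End.exists_sum_mem_eigenspace_pow hm hζ hσm x
  rw [TensorProduct.tmul_sum]
  refine Submodule.sum_mem _ fun ε _ => ?_
  obtain ⟨p₁, hp₁, p₂, hp₂, rfl⟩ := Submodule.mem_sup.1 (mem_twistedMonomials_sup_span hm hF ε p)
  rw [TensorProduct.add_tmul]
  exact Submodule.add_mem_sup (tmul_mem_twistedLoop hp₁ (hc ε)) (tmul_mem_loopIdeal hp₂ _)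

end TwistedLoop

theorem stmt10_general
    (m : ℕ) (hm : 0 < m) (σ : g ≃ₗ⁅ℂ⁆ g) (hσ : ∀ x, (⇑σ)^[m] x = x)
    (ζ : ℂ) (hζ : IsPrimitiveRoot ζ m)
    (ℓ : ℕ) (a : Fin ℓ → ℂ) (ha : ∀ r, a r ≠ 0)
    (hinjm : Function.Injective fun r => a r ^ m)
    (N : ℕ) :
    Function.Surjective fun z : ↥(twistedLoop m σ ζ) =>
      LieSubmodule.Quotient.mk' (loopIdeal (∏ r, (T 1 - C (a r)) ^ N)) (z : Loop g) := by
  have hF : toLaurent (∏ r, (X - Polynomial.C (a r)) ^ N) = ∏ r, (T 1 - C (a r)) ^ N := by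
    simp only [map_prod, map_pow, map_sub, Polynomial.toLaurent_X, Polynomial.toLaurent_C]
  rw [← hF]
  exact LieSubalgebra.surjective_quotient_mk'_of_sup_eq_top <|
    twistedLoop_sup_loopIdeal_eq_top hm hσ hζ <|
      Polynomial.exists_prod_X_sub_C_pow_dvd_sub_expand (Nat.cast_ne_zero.2 hm.ne') ha hinjm N

/-- If `(a 1, …, a ℓ)` and `(a 1 ^ m, …, a ℓ ^ m)` both have pairwise
distinct (nonzero) coordinates, then the composite
`L^σ(g) → L(g) → L(g)/(g ⊗ ∏_k (t - a k)^N ℂ[t,t⁻¹])` is surjective for every `N > 0`. -/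
theorem stmt10 [LieAlgebra.IsSimple ℂ g] [FiniteDimensional ℂ g]
    (m : ℕ) (hm : 0 < m) (σ : g ≃ₗ⁅ℂ⁆ g) (hσ : ∀ x, (⇑σ)^[m] x = x)
    (ζ : ℂ) (hζ : IsPrimitiveRoot ζ m)
    (ℓ : ℕ) (a : Fin ℓ → ℂ) (ha : ∀ r, a r ≠ 0)
    (hinj : Function.Injective a)
    (hinjm : Function.Injective fun r => a r ^ m)
    (N : ℕ) (hN : 0 < N) :
    Function.Surjective fun z : ↥(twistedLoop m σ ζ) =>
      LieSubmodule.Quotient.mk' (loopIdeal (∏ r, (T 1 - C (a r)) ^ N)) (z : Loop g) :=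
  stmt10_general m hm σ hσ ζ hζ ℓ a ha hinjm N
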